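/- arXiv:1610.08407 — 3 statements merged into one kernel-verified Lean document; each statement's English description precedes it below -/
import Mathlib

section
/- Let s be a score vector of length m whose difference vector d(s) contains two consecutive entries equal to 1 (i.e., there is an index i with α_{i+2} − α_{i+1} = 1 and α_{i+1} − α_i = 1). Then any score vector s' of length m+1 obtained from s by inserting a value at an admissible position (position j with j = 0, j = m, or α_{j+1} = α_j, with the result still nonincreasing from the top) also has two consecutive entries of its difference vector equal to 1. -/
/-- If the difference vector of a score vector `(α_m, …, α_1)` contains two consecutive
entries equal to `1` (i.e. there is `i` with `α_{i+1} − α_i = 1` and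
`α_{i+2} − α_{i+1} = 1`), then after inserting a value at any admissible position
(`j = 0`, `j = m`, or `α_{j+1} = α_j`, with the result still nonincreasing from the
top), the resulting score vector of length `m+1` also has two consecutive entries of
its difference vector equal to `1`. -/
theorem stmt2 (m : ℕ) (α : ℕ → ℕ)
    (hmono : ∀ j k, 1 ≤ j → j ≤ k → k ≤ m → α j ≤ α k)
    (hpat : ∃ i, 1 ≤ i ∧ i + 2 ≤ m ∧
      α (i + 1) - α i = 1 ∧ α (i + 2) - α (i + 1) = 1)
    (j : ℕ) (hjm : j ≤ m) (hadm : j = 0 ∨ j = m ∨ α (j + 1) = α j)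
    (β : ℕ) (α' : ℕ → ℕ)
    (hins : ∀ l, 1 ≤ l → l ≤ m + 1 →
      α' l = if l ≤ j then α l else if l = j + 1 then β else α (l - 1))
    (hmono' : ∀ l k, 1 ≤ l → l ≤ k → k ≤ m + 1 → α' l ≤ α' k) :
    ∃ i, 1 ≤ i ∧ i + 2 ≤ m + 1 ∧
      α' (i + 1) - α' i = 1 ∧ α' (i + 2) - α' (i + 1) = 1 := by
  obtain ⟨i, hi1, hi2, hd1, hd2⟩ := hpat
  rcases lt_or_ge j i with hji | hij
  · -- j < i : use i+1, entries shift
    refine ⟨i + 1, by omega, by omega, ?_, ?_⟩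
    · rw [hins (i+1) (by omega) (by omega), hins (i+2) (by omega) (by omega)]
      rw [if_neg (by omega), if_neg (by omega), if_neg (by omega), if_neg (by omega)]
      simpa using hd1
    · rw [hins (i+2) (by omega) (by omega), hins (i+3) (by omega) (by omega)]
      rw [if_neg (by omega), if_neg (by omega), if_neg (by omega), if_neg (by omega)]
      simpa using hd2
  · rcases lt_or_ge j (i + 2) with hji2 | hij2
    · -- j = i or j = i+1 : impossible
      exfalso
      rcases hadm with h0 | hm | heq
      · omega
      · omega
      · rcases (by omega : j = i ∨ j = i + 1) with rfl | rfl
        · have : α (j + 1) = α j + 1 := by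
            have := hmono j (j+1) hi1 (by omega) (by omega); omega
          omega
        · have heq2 : α (i + 2) = α (i + 1) := heq
          have : α (i + 2) = α (i + 1) + 1 := by
            have := hmono (i+1) (i+2) (by omega) (by omega) (by omega); omega
          omega
    · -- j ≥ i + 2 : use i, entries unchanged
      refine ⟨i, hi1, by omega, ?_, ?_⟩
      · rw [hins i (by omega) (by omega), hins (i+1) (by omega) (by omega),
          if_pos (by omega), if_pos (by omega)]
        exact hd1
      · rw [hins (i+1) (by omega) (by omega), hins (i+2) (by omega) (by omega),
          if_pos (by omega), if_pos (by omega)]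
        exact hd2
end

section
/- Let s be a score vector of length m whose entries contain four consecutive values of the form (α+1, α+1, α, α) reading from the top (equivalently, the difference vector contains the pattern (0, 1, 0)). Then any score vector s' of length m+1 obtained from s by inserting a value at an admissible position (j = 0, j = m, or α_{j+1} = α_j, with the result still nonincreasing from the top) also contains the pattern (0, 1, 0) in its difference vector. -/
/-- If a score vector `(α_m, …, α_1)` contains four consecutive values of the form
`(α+1, α+1, α, α)` reading from the top (equivalently, its difference vector contains
the pattern `(0,1,0)`: there is `i` with `α_{i+1} = α_i`, `α_{i+2} = α_{i+1} + 1` and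
`α_{i+3} = α_{i+2}`), then after inserting a value at any admissible position
(`j = 0`, `j = m`, or `α_{j+1} = α_j`, with the result still nonincreasing from the
top), the resulting score vector of length `m+1` also contains the pattern `(0,1,0)`
in its difference vector. -/
theorem stmt3 (m : ℕ) (α : ℕ → ℕ)
    (hmono : ∀ j k, 1 ≤ j → j ≤ k → k ≤ m → α j ≤ α k)
    (hpat : ∃ i, 1 ≤ i ∧ i + 3 ≤ m ∧
      α (i + 1) = α i ∧ α (i + 2) = α (i + 1) + 1 ∧ α (i + 3) = α (i + 2))
    (j : ℕ) (hjm : j ≤ m) (hadm : j = 0 ∨ j = m ∨ α (j + 1) = α j)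
    (β : ℕ) (α' : ℕ → ℕ)
    (hins : ∀ l, 1 ≤ l → l ≤ m + 1 →
      α' l = if l ≤ j then α l else if l = j + 1 then β else α (l - 1))
    (hmono' : ∀ l k, 1 ≤ l → l ≤ k → k ≤ m + 1 → α' l ≤ α' k) :
    ∃ i, 1 ≤ i ∧ i + 3 ≤ m + 1 ∧
      α' (i + 1) = α' i ∧ α' (i + 2) = α' (i + 1) + 1 ∧ α' (i + 3) = α' (i + 2) := by
  obtain ⟨i, hi1, him, h1, h2, h3⟩ := hpat
  have e1 : ∀ l, 1 ≤ l → l ≤ j → α' l = α l := by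
    intro l hl1 hl2
    rw [hins l hl1 (by omega), if_pos hl2]
  have e2 : ∀ l, j + 2 ≤ l → l ≤ m + 1 → α' l = α (l - 1) := by
    intro l hl1 hl2
    rw [hins l (by omega) hl2, if_neg (by omega), if_neg (by omega)]
  have eβ : 1 ≤ j + 1 → j + 1 ≤ m + 1 → α' (j + 1) = β := by
    intro ha hb
    rw [hins (j+1) ha hb, if_neg (by omega), if_pos rfl]
  rcases lt_or_ge j i with hj | hj
  · -- j < i : pattern shifts to i+1
    have b0 : α' (i+1) = α i := by
      rw [e2 _ (by omega) (by omega)]; congr 1 <;> omega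
    have b1 : α' (i+2) = α (i+1) := by
      rw [e2 _ (by omega) (by omega)]; congr 1 <;> omega
    have b2 : α' (i+3) = α (i+2) := by
      rw [e2 _ (by omega) (by omega)]; congr 1 <;> omega
    have b3 : α' (i+4) = α (i+3) := by
      rw [e2 _ (by omega) (by omega)]; congr 1 <;> omega
    refine ⟨i + 1, by omega, by omega, ?_, ?_, ?_⟩
    · show α' (i+2) = α' (i+1); omega
    · show α' (i+3) = α' (i+2) + 1; omega
    · show α' (i+4) = α' (i+3); omega
  rcases lt_or_ge (i + 2) j with hj2 | hj2
  · -- i + 3 ≤ j : pattern stays at i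
    refine ⟨i, hi1, by omega, ?_, ?_, ?_⟩ <;>
      rw [e1 _ (by omega) (by omega), e1 _ (by omega) (by omega)] <;> omega
  have hcases : i = j ∨ i + 1 = j ∨ i + 2 = j := by omega
  rcases hcases with h0 | h0 | h0 <;> subst h0
  · -- j = i
    have hb1 := hmono' i (i+1) hi1 (by omega) (by omega)
    have hb2 := hmono' (i+1) (i+2) (by omega) (by omega) (by omega)
    have hai : α' i = α i := e1 _ hi1 le_rfl
    have hab : α' (i+1) = β := eβ (by omega) (by omega)
    have ha2 : α' (i+2) = α (i+1) := by
      rw [e2 _ (by omega) (by omega)]; congr 1 <;> omega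
    have ha3 : α' (i+3) = α (i+2) := by
      rw [e2 _ (by omega) (by omega)]; congr 1 <;> omega
    have ha4 : α' (i+4) = α (i+3) := by
      rw [e2 _ (by omega) (by omega)]; congr 1 <;> omega
    refine ⟨i + 1, by omega, by omega, ?_, ?_, ?_⟩
    · show α' (i+2) = α' (i+1); omega
    · show α' (i+3) = α' (i+2) + 1; omega
    · show α' (i+4) = α' (i+3); omega
  · -- j = i + 1 : contradicts admissibility
    exfalso
    rcases hadm with h | h | h
    · omega
    · omega
    · have h' : α (i+2) = α (i+1) := h
      omega
  · -- j = i + 2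
    have hb1 := hmono' (i+2) (i+3) (by omega) (by omega) (by omega)
    have hb2 := hmono' (i+3) (i+4) (by omega) (by omega) (by omega)
    have hai : α' i = α i := e1 _ hi1 (by omega)
    have ha1 : α' (i+1) = α (i+1) := e1 _ (by omega) (by omega)
    have ha2 : α' (i+2) = α (i+2) := e1 _ (by omega) (by omega)
    have hab : α' (i+3) = β := eβ (by omega) (by omega)
    have ha4 : α' (i+4) = α (i+3) := by
      rw [e2 _ (by omega) (by omega)]; congr 1 <;> omega
    exact ⟨i, hi1, by omega, by omega, by omega, by omega⟩
end

section
/- Let s be a smooth scoring rule, i.e., for all m above some threshold the score vector s_{m} is obtained from s_{m−1} by inserting a value at an admissible position. If for some ℓ (above the threshold) the score vector s_ℓ has two distinct nonzero adjacent differences (Δ(s_ℓ) > δ(s_ℓ) ≥ 1), then for every m ≥ ℓ the score vector s_m also satisfies Δ(s_m) > δ(s_m) ≥ 1. -/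
/-- The maximum adjacent difference `Δ(s)` of a score vector `(α_m, …, α_1)`. -/
def maxDiff (m : ℕ) (α : ℕ → ℕ) : ℕ :=
  (Finset.Icc 2 m).sup (fun i => α i - α (i - 1))

/-- The minimum strictly positive adjacent difference `δ(s)` of a score vector. -/
noncomputable def minPosDiff (m : ℕ) (α : ℕ → ℕ) : ℕ :=
  sInf {d : ℕ | 0 < d ∧ ∃ i, 2 ≤ i ∧ i ≤ m ∧ α i - α (i - 1) = d}

lemma preserve_diff (m i : ℕ) (sm sm1 : ℕ → ℕ) (β : ℕ)
    (him : i ≤ m)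
    (hadm : i = 0 ∨ i = m ∨ sm (i + 1) = sm i)
    (hins : ∀ j, 1 ≤ j → j ≤ m + 1 →
      sm1 j = if j ≤ i then sm j else if j = i + 1 then β else sm (j - 1))
    (k : ℕ) (hk2 : 2 ≤ k) (hkm : k ≤ m) (hpos : 0 < sm k - sm (k - 1)) :
    ∃ k', 2 ≤ k' ∧ k' ≤ m + 1 ∧ sm1 k' - sm1 (k' - 1) = sm k - sm (k - 1) := by
  have hkne : k ≠ i + 1 := by
    intro h
    rcases hadm with h0 | hm | he
    · omega
    · omega
    · rw [h] at hpos
      simp [he] at hpos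
  rcases lt_or_ge k (i + 1) with hlt | hge
  · refine ⟨k, hk2, by omega, ?_⟩
    rw [hins k (by omega) (by omega), hins (k - 1) (by omega) (by omega)]
    rw [if_pos (by omega : k ≤ i), if_pos (by omega : k - 1 ≤ i)]
  · have hk : i + 2 ≤ k := by omega
    refine ⟨k + 1, by omega, by omega, ?_⟩
    rw [hins (k + 1) (by omega) (by omega)]
    rw [show k + 1 - 1 = k by omega, hins k (by omega) (by omega)]
    rw [if_neg (by omega : ¬ k + 1 ≤ i), if_neg (by omega : ¬ k + 1 = i + 1),
        if_neg (by omega : ¬ k ≤ i), if_neg (by omega : ¬ k = i + 1)]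

/-- Let `s` be a smooth scoring rule: each score vector `s (m+1)` (for `m` above a
threshold `n₀`) is obtained from `s m` by inserting one new score value at an
admissible position (`i = 0`, `i = m`, or `α_{i+1} = α_i`). If for some `ℓ ≥ n₀` we
have `Δ(s_ℓ) > δ(s_ℓ) ≥ 1`, then for every `m ≥ ℓ` we also have
`Δ(s_m) > δ(s_m) ≥ 1`. -/
theorem stmt16 (n₀ : ℕ) (s : ℕ → ℕ → ℕ)
    (hmono : ∀ m, ∀ i j, 1 ≤ i → i ≤ j → j ≤ m → s m i ≤ s m j)
    (hsmooth : ∀ m, n₀ ≤ m →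
      ∃ i, i ≤ m ∧ (i = 0 ∨ i = m ∨ s m (i + 1) = s m i) ∧
        ∃ β, ∀ j, 1 ≤ j → j ≤ m + 1 →
          s (m + 1) j = if j ≤ i then s m j else if j = i + 1 then β else s m (j - 1))
    (ℓ : ℕ) (hℓ : n₀ ≤ ℓ) (hℓ2 : 2 ≤ ℓ)
    (hΔδ : minPosDiff ℓ (s ℓ) < maxDiff ℓ (s ℓ))
    (hδ : 1 ≤ minPosDiff ℓ (s ℓ)) :
    ∀ m, ℓ ≤ m → minPosDiff m (s m) < maxDiff m (s m) ∧ 1 ≤ minPosDiff m (s m) := by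
  intro m hm
  induction m, hm using Nat.le_induction with
  | base => exact ⟨hΔδ, hδ⟩
  | succ m hm ih =>
    obtain ⟨hlt, h1⟩ := ih
    obtain ⟨i, him, hadm, β, hins⟩ := hsmooth m (le_trans hℓ hm)
    have hm2 : 2 ≤ m := le_trans hℓ2 hm
    -- δ(m) is attained
    have hsetne : {d : ℕ | 0 < d ∧ ∃ k, 2 ≤ k ∧ k ≤ m ∧ s m k - s m (k - 1) = d}.Nonempty := by
      by_contra h
      rw [Set.not_nonempty_iff_eq_empty] at h
      rw [minPosDiff, h, Nat.sInf_empty] at h1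
      omega
    have hmem : minPosDiff m (s m) ∈
        {d : ℕ | 0 < d ∧ ∃ k, 2 ≤ k ∧ k ≤ m ∧ s m k - s m (k - 1) = d} := by
      rw [minPosDiff]; exact Nat.sInf_mem hsetne
    obtain ⟨hdpos, k, hk2, hkm, hkeq⟩ := hmem
    obtain ⟨k', hk'2, hk'm, hk'eq⟩ :=
      preserve_diff m i (s m) (s (m + 1)) β him hadm hins k hk2 hkm (by omega)
    -- so δ(m+1) ≤ δ(m)
    have hδnew_mem : minPosDiff m (s m) ∈
        {d : ℕ | 0 < d ∧ ∃ j, 2 ≤ j ∧ j ≤ m + 1 ∧ s (m + 1) j - s (m + 1) (j - 1) = d} :=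
      ⟨hdpos, k', hk'2, hk'm, by rw [hk'eq, hkeq]⟩
    have hδle : minPosDiff (m + 1) (s (m + 1)) ≤ minPosDiff m (s m) := by
      rw [minPosDiff]; exact Nat.sInf_le hδnew_mem
    -- Δ(m) is attained
    have hΔpos : 0 < maxDiff m (s m) := by omega
    obtain ⟨K, hK, hKsup⟩ := Finset.exists_mem_eq_sup (Finset.Icc 2 m)
      (Finset.nonempty_Icc.mpr hm2) (fun j => s m j - s m (j - 1))
    simp only [Finset.mem_Icc] at hK
    have hKpos : 0 < s m K - s m (K - 1) := by
      rw [maxDiff] at hΔpos; rw [← hKsup]; exact hΔpos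
    obtain ⟨K', hK'2, hK'm, hK'eq⟩ :=
      preserve_diff m i (s m) (s (m + 1)) β him hadm hins K hK.1 hK.2 hKpos
    have hΔle : maxDiff m (s m) ≤ maxDiff (m + 1) (s (m + 1)) := by
      rw [maxDiff, hKsup, maxDiff]
      calc s m K - s m (K - 1) = s (m + 1) K' - s (m + 1) (K' - 1) := hK'eq.symm
        _ ≤ _ := Finset.le_sup (f := fun j => s (m + 1) j - s (m + 1) (j - 1))
          (Finset.mem_Icc.mpr ⟨hK'2, hK'm⟩)
    -- δ(m+1) ≥ 1
    have hsetne' : {d : ℕ | 0 < d ∧ ∃ j, 2 ≤ j ∧ j ≤ m + 1 ∧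
        s (m + 1) j - s (m + 1) (j - 1) = d}.Nonempty := ⟨_, hδnew_mem⟩
    have h1' : 0 < minPosDiff (m + 1) (s (m + 1)) := by
      rw [minPosDiff]; exact (Nat.sInf_mem hsetne').1
    exact ⟨by omega, h1'⟩
end
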